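/- arXiv:1112.0497 — 2 statements merged into one kernel-verified Lean document; each statement's English description precedes it below -/
import Mathlib

section
/- Let $0 < H < 1/2$ and let $\ell(y)$ denote the derivative $(f^{-1})'(y)$ of the inverse of the restriction of $f(s) = \frac{1}{\Gamma(H+1/2)}[(1-s)_+^{H-1/2} - (-s)_+^{H-1/2}]$ to $(-\infty, 0)$, defined for $y < 0$. Then $\ell(y) \sim -c_H\, (-y)^{-(3-2H)/(1-2H)}$ as $y \to -\infty$, where $c_H = \frac{2}{1-2H}\left(\Gamma(H+1/2)\right)^{-2/(1-2H)}$. -/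
open Filter

/-- The Mandelbrot–Van Ness kernel at `t = 1`. -/
noncomputable def mvnKernel1 (H s : ℝ) : ℝ :=
  (1 / Real.Gamma (H + 1/2)) *
    ((max (1 - s) 0) ^ (H - 1/2) - (max (-s) 0) ^ (H - 1/2))

/-!
Write `a = H - 1/2 < 0`, `Γ = Γ(H + 1/2)` and `u = -f⁻¹(y) > 0`. The equation `f(-u) = y` reads
`u^a - (1 + u)^a = Γ (-y)`, and `ℓ(y) = 1 / f'(-u) = Γ / (a (u^(a-1) - (1 + u)^(a-1)))`.
As `y → -∞` the right-hand side `Γ (-y)` blows up, which forces `u → 0⁺`; there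
`u^b - (1 + u)^b ~ u^b` for every `b < 0`. Hence `u^a ~ Γ (-y)`, so
`u^(a-1) = (u^a)^((a-1)/a) ~ (Γ (-y))^((a-1)/a)`, and this gives the equivalent of `ℓ`.
-/

open Asymptotics Topology

noncomputable def rpowGap (b u : ℝ) : ℝ := u ^ b - (1 + u) ^ b

theorem Asymptotics.IsEquivalent.rpow_of_eventually_nonneg {α : Type*} {l : Filter α}
    {v w : α → ℝ} (hw : ∀ᶠ t in l, 0 ≤ w t) (h : v ~[l] w) (r : ℝ) :
    (fun t => v t ^ r) ~[l] fun t => w t ^ r := by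
  have hmax : w =ᶠ[l] fun t => max (w t) 0 := hw.mono fun t ht => (max_eq_left ht).symm
  refine ((h.congr_right hmax).rpow (fun t => le_max_right _ _) (r := r)).congr_right ?_
  filter_upwards [hmax] with t ht
  simp [← ht]

theorem HasDerivAt.mul_eq_one_of_eventually_leftInverse {f g : ℝ → ℝ} {f' g' y : ℝ}
    (hf : HasDerivAt f f' (g y)) (hg : HasDerivAt g g' y) (hfg : ∀ᶠ z in 𝓝 y, f (g z) = z) :
    f' * g' = 1 :=
  (hf.comp y hg).unique ((hasDerivAt_id y).congr_of_eventuallyEq hfg)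

section rpowGap

variable {b : ℝ}

theorem isEquivalent_rpowGap (hb : b < 0) : rpowGap b ~[𝓝[>] 0] fun u => u ^ b := by
  have hbounded : (fun u : ℝ => (1 + u) ^ b) =O[𝓝[>] 0] (fun _ => (1 : ℝ)) := by
    have : ContinuousAt (fun u : ℝ => (1 + u) ^ b) 0 :=
      (continuousAt_const.add continuousAt_id).rpow_const (Or.inl (by norm_num))
    exact (this.tendsto.mono_left nhdsWithin_le_nhds).isBigO_one ℝ
  have hsmall : (fun _ => (1 : ℝ)) =o[𝓝[>] 0] fun u : ℝ => u ^ b :=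
    (isLittleO_one_left_iff ℝ).mpr
      (tendsto_norm_atTop_atTop.comp (tendsto_rpow_neg_nhdsGT_zero hb))
  exact IsEquivalent.refl.sub_isLittleO (hbounded.trans_isLittleO hsmall)

variable {α : Type*} {l : Filter α} {u x : α → ℝ}

theorem tendsto_nhdsGT_zero_of_tendsto_rpowGap (hb : b < 0) (hu : ∀ᶠ t in l, 0 < u t)
    (h : Tendsto (fun t => rpowGap b (u t)) l atTop) : Tendsto u l (𝓝[>] 0) := by
  have hpow : Tendsto (fun t => u t ^ b) l atTop := by
    refine tendsto_atTop_mono' l ?_ h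
    filter_upwards [hu] with t ht
    have : 0 < (1 + u t) ^ b := by positivity
    simp only [rpowGap]
    linarith
  have hinv : Tendsto (fun s : ℝ => s ^ b⁻¹) atTop (𝓝 0) := by
    simpa using tendsto_rpow_neg_atTop (y := -b⁻¹) (by simpa using hb)
  refine tendsto_nhdsWithin_iff.mpr ⟨(hinv.comp hpow).congr' ?_, hu⟩
  filter_upwards [hu] with t ht
  simp [← Real.rpow_mul ht.le, mul_inv_cancel₀ hb.ne]

theorem isEquivalent_rpowGap_sub_one (hb : b < 0) (hu : ∀ᶠ t in l, 0 < u t)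
    (hx : Tendsto x l atTop) (hux : ∀ᶠ t in l, rpowGap b (u t) = x t) :
    (fun t => rpowGap (b - 1) (u t)) ~[l] fun t => x t ^ ((b - 1) / b) := by
  have hu0 : Tendsto u l (𝓝[>] 0) :=
    tendsto_nhdsGT_zero_of_tendsto_rpowGap hb hu (hx.congr' (hux.mono fun _ h => h.symm))
  have hpow : (fun t => u t ^ b) ~[l] x :=
    ((isEquivalent_rpowGap hb).comp_tendsto hu0).symm.congr_right hux
  refine ((isEquivalent_rpowGap (by linarith)).comp_tendsto hu0).trans ?_
  refine (hpow.rpow_of_eventually_nonneg (hx.eventually_ge_atTop 0) ((b - 1) / b)).congr_left ?_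
  filter_upwards [hu] with t ht
  simp [← Real.rpow_mul ht.le, mul_div_cancel₀ _ hb.ne]

end rpowGap

section mvnKernel1

variable {H : ℝ}

theorem mvnKernel1_nonneg (hH : -1/2 < H) {s : ℝ} (hs : 0 ≤ s) : 0 ≤ mvnKernel1 H s := by
  have hΓ : 0 < Real.Gamma (H + 1/2) := Real.Gamma_pos_of_pos (by linarith)
  unfold mvnKernel1
  rw [max_eq_right (by linarith : -s ≤ 0)]
  rcases eq_or_ne (H - 1/2) 0 with h | h
  · rw [h, Real.rpow_zero, Real.rpow_zero, sub_self, mul_zero]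
  · rw [Real.zero_rpow h, sub_zero]
    positivity

theorem rpowGap_eq_mul_neg_mvnKernel1 (hH : -1/2 < H) {u : ℝ} (hu : 0 < u) :
    rpowGap (H - 1/2) u = Real.Gamma (H + 1/2) * -mvnKernel1 H (-u) := by
  have hΓ : 0 < Real.Gamma (H + 1/2) := Real.Gamma_pos_of_pos (by linarith)
  rw [mvnKernel1, rpowGap, max_eq_left (by linarith), neg_neg, max_eq_left hu.le, sub_neg_eq_add,
    mul_neg, ← mul_assoc, mul_one_div_cancel hΓ.ne', one_mul, neg_sub]

theorem hasDerivAt_mvnKernel1_neg {u : ℝ} (hu : 0 < u) :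
    HasDerivAt (mvnKernel1 H)
      ((H - 1/2) * rpowGap (H - 1/2 - 1) u / Real.Gamma (H + 1/2)) (-u) := by
  have hgap : HasDerivAt (fun s => (1 - s) ^ (H - 1/2) - (-s) ^ (H - 1/2))
      (-1 * (H - 1/2) * (1 - -u) ^ (H - 1/2 - 1) - -1 * (H - 1/2) * (-(-u)) ^ (H - 1/2 - 1)) (-u) :=
    ((hasDerivAt_id' (-u)).const_sub 1 |>.rpow_const (Or.inl (by linarith))).sub
      ((hasDerivAt_neg (-u)).rpow_const (Or.inl (by simpa using hu.ne')))
  have heq : mvnKernel1 H =ᶠ[𝓝 (-u)]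
      fun s => 1 / Real.Gamma (H + 1/2) * ((1 - s) ^ (H - 1/2) - (-s) ^ (H - 1/2)) := by
    filter_upwards [eventually_lt_nhds (neg_neg_of_pos hu)] with s hs
    rw [mvnKernel1, max_eq_left (by linarith), max_eq_left (by linarith)]
  refine ((hgap.const_mul _).congr_of_eventuallyEq heq).congr_deriv ?_
  simp only [rpowGap, neg_neg, sub_neg_eq_add]
  ring

end mvnKernel1

theorem inv_mul_rpow_div_eq {a c t : ℝ} (ha : a ≠ 0) (hc : 0 < c) (ht : 0 < t) :
    (a * (c * t) ^ ((a - 1) / a) / c)⁻¹ = a⁻¹ * c ^ a⁻¹ * t ^ ((1 - a) / a) := by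
  have hexp₁ : (a - 1) / a = 1 - a⁻¹ := by field_simp
  have hexp₂ : (1 - a) / a = a⁻¹ - 1 := by field_simp
  rw [hexp₁, hexp₂, Real.rpow_sub (by positivity), Real.rpow_sub ht, Real.rpow_one, Real.rpow_one,
    Real.mul_rpow hc.le ht.le]
  have : 0 < c ^ a⁻¹ := by positivity
  have : 0 < t ^ a⁻¹ := by positivity
  field_simp

theorem inv_mul_rpow_div_eq_of_lt_half {H c t : ℝ} (hH : H < 1/2) (hc : 0 < c) (ht : 0 < t) :
    ((H - 1/2) * (c * t) ^ ((H - 1/2 - 1) / (H - 1/2)) / c)⁻¹ =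
      -((2 / (1 - 2*H)) * c ^ (-2 / (1 - 2*H))) * t ^ (-(3 - 2*H) / (1 - 2*H)) := by
  have hinv : (H - 1/2)⁻¹ = -2 / (1 - 2*H) := by
    rw [inv_eq_one_div, div_eq_div_iff (by linarith) (by linarith)]
    ring
  have hexp : (1 - (H - 1/2)) / (H - 1/2) = -(3 - 2*H) / (1 - 2*H) := by
    rw [div_eq_div_iff (by linarith) (by linarith)]
    ring
  rw [inv_mul_rpow_div_eq (by linarith) hc ht, hinv, hexp]
  ring

theorem ell_asymp_atBot_general (H : ℝ) (hH0 : 0 < H) (hH1 : H < 1/2)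
    (finv ell : ℝ → ℝ)
    (hright : ∀ y < (0:ℝ), mvnKernel1 H (finv y) = y)
    (hder : ∀ y < (0:ℝ), HasDerivAt finv (ell y) y) :
    Tendsto (fun y : ℝ =>
        ell y / (-((2 / (1 - 2*H)) * (Real.Gamma (H + 1/2)) ^ (-2 / (1 - 2*H))) *
          (-y) ^ (-(3 - 2*H) / (1 - 2*H))))
      atBot (nhds 1) := by
  set Γ := Real.Gamma (H + 1/2)
  have hΓ : 0 < Γ := Real.Gamma_pos_of_pos (by linarith)
  have hneg : ∀ᶠ y : ℝ in atBot, y < 0 := Iio_mem_atBot 0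
  have hu : ∀ y < 0, 0 < -finv y := fun y hy => neg_pos.mpr <|
    not_le.mp fun h => (mvnKernel1_nonneg (by linarith) h).not_gt (hright y hy ▸ hy)
  have hgap : ∀ᶠ y in atBot, rpowGap (H - 1/2) (-finv y) = Γ * -y := by
    filter_upwards [hneg] with y hy
    rw [rpowGap_eq_mul_neg_mvnKernel1 (by linarith) (hu y hy), neg_neg, hright y hy]
  have hell : ell =ᶠ[atBot] fun y => ((H - 1/2) * rpowGap (H - 1/2 - 1) (-finv y) / Γ)⁻¹ := by
    filter_upwards [hneg] with y hy
    have hf := hasDerivAt_mvnKernel1_neg (H := H) (hu y hy)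
    rw [neg_neg] at hf
    exact eq_inv_of_mul_eq_one_right (hf.mul_eq_one_of_eventually_leftInverse (hder y hy)
      (eventually_lt_nhds hy |>.mono hright))
  have hD := isEquivalent_rpowGap_sub_one (by linarith) (hneg.mono hu)
    (tendsto_neg_atBot_atTop.const_mul_atTop hΓ) hgap
  have hequiv := (((IsEquivalent.refl (u := fun _ => H - 1/2)).mul hD).div
    (IsEquivalent.refl (u := fun _ => Γ))).inv
  refine (isEquivalent_iff_tendsto_one ?_).mp ((hequiv.congr_left hell.symm).congr_right ?_)
  · filter_upwards [hneg] with y hy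
    have hc : 0 < 2 / (1 - 2*H) * Γ ^ (-2 / (1 - 2*H)) :=
      mul_pos (div_pos two_pos (by linarith)) (Real.rpow_pos_of_pos hΓ _)
    exact (mul_neg_of_neg_of_pos (neg_neg_of_pos hc) (Real.rpow_pos_of_pos (neg_pos.mpr hy) _)).ne
  · filter_upwards [hneg] with y hy
    exact inv_mul_rpow_div_eq_of_lt_half hH1 hΓ (neg_pos.mpr hy)

/-- For `0 < H < 1/2`, if `finv` is the inverse of the restriction of the kernel
`f` to `(-∞,0)` and `ℓ(y) = (f⁻¹)'(y)` for `y < 0`, then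
`ℓ(y) ∼ -c_H (-y)^{-(3-2H)/(1-2H)}` as `y → -∞`, where
`c_H = (2/(1-2H)) Γ(H+1/2)^{-2/(1-2H)}`. -/
theorem ell_asymp_atBot (H : ℝ) (hH0 : 0 < H) (hH1 : H < 1/2)
    (finv ell : ℝ → ℝ)
    (hleft : ∀ s < (0:ℝ), finv (mvnKernel1 H s) = s)
    (hright : ∀ y < (0:ℝ), mvnKernel1 H (finv y) = y)
    (hder : ∀ y < (0:ℝ), HasDerivAt finv (ell y) y) :
    Tendsto (fun y : ℝ =>
        ell y / (-((2 / (1 - 2*H)) * (Real.Gamma (H + 1/2)) ^ (-2 / (1 - 2*H))) *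
          (-y) ^ (-(3 - 2*H) / (1 - 2*H))))
      atBot (nhds 1) :=
  ell_asymp_atBot_general H hH0 hH1 finv ell hright hder
end

section
/- Let $h : [a,b] \to (0,\infty)$ be a positive function with a continuous nonvanishing derivative on $[a,b] \subset \mathbb{R}$. Then there exists $c > 0$ such that for all $x \in \mathbb{R}$, $\int_a^b (1 - \cos(h(s)x))\, ds \geq c\,(x^2 \wedge 1)$. -/
/-
With `|h'| ≤ M` on `[a, b]`, the substitution `t = h s` gives
`|∫_{h a}^{h b} (1 - cos (t x)) dt| ≤ M ∫_a^b (1 - cos (h s x)) ds`, and `h a ≠ h b` by Rolle.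
For `α ≠ β` the left integral is `(β - α) - (sin (β x) - sin (α x)) / x`, whose absolute value
is at least `2 (|u| - |sin u|) / |x|` with `u = (β - α) x / 2`. Finally
`|u| - |sin u| ≥ min (|u|³, |u|) / 8` (Taylor for `|u| ≤ 1`, monotonicity of `u - |sin u|` and
`|sin u| ≤ 1` beyond), which turns into a multiple of `min (x², 1)`.
-/

open Real Set intervalIntegral

lemma cube_div_seven_le_sub_sin {u : ℝ} (hu₀ : 0 ≤ u) (hu₁ : u ≤ 1) : u ^ 3 / 7 ≤ u - sin u := by
  have hbound := (abs_le.1 (sin_bound (x := u) (by rwa [abs_of_nonneg hu₀]))).2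
  rw [abs_of_nonneg hu₀] at hbound
  have : u ^ 5 ≤ u ^ 3 := pow_le_pow_of_le_one hu₀ hu₁ (by norm_num)
  linarith [pow_nonneg hu₀ 3]

lemma monotone_sub_abs_sin : Monotone fun u : ℝ => u - |sin u| := by
  intro v u hvu
  have := (abs_sub_abs_le_abs_sub (sin u) (sin v)).trans (abs_sin_sub_sin_le u v)
  rw [abs_of_nonneg (sub_nonneg.2 hvu)] at this
  dsimp only
  linarith

lemma min_pow_three_le_sub_abs_sin (u : ℝ) : min (|u| ^ 3) |u| ≤ 8 * (|u| - |sin u|) := by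
  wlog hu : 0 ≤ u generalizing u
  · simpa [sin_neg] using this (-u) (by linarith)
  rw [abs_of_nonneg hu]
  rcases le_total u 1 with hu₁ | hu₁
  · have hsin : |sin u| = sin u :=
      abs_of_nonneg (sin_nonneg_of_nonneg_of_le_pi hu (hu₁.trans (by linarith [pi_gt_three])))
    have := cube_div_seven_le_sub_sin hu hu₁
    rw [hsin]
    linarith [min_le_left (u ^ 3) u, pow_nonneg hu 3]
  · have h_one : 1 / 7 ≤ 1 - |sin 1| := by
      have := cube_div_seven_le_sub_sin zero_le_one le_rfl
      rw [abs_of_nonneg (sin_nonneg_of_nonneg_of_le_pi zero_le_one (by linarith [pi_gt_three]))]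
      linarith
    have hmono : 1 - |sin 1| ≤ u - |sin u| := monotone_sub_abs_sin hu₁
    have := abs_sin_le_one u
    rcases le_total u (8 / 7) with hu₂ | hu₂ <;> linarith [min_le_right (u ^ 3) u]

lemma abs_sin_sub_sin_le_two_mul_abs_sin (p q : ℝ) : |sin p - sin q| ≤ 2 * |sin ((p - q) / 2)| := by
  rw [sin_sub_sin, abs_mul, abs_mul, abs_two]
  exact mul_le_of_le_one_right (by positivity) (abs_cos_le_one _)

lemma integral_one_sub_cos_mul {x : ℝ} (hx : x ≠ 0) (α β : ℝ) :
    ∫ t in α..β, (1 - cos (t * x)) = β - α - (sin (β * x) - sin (α * x)) / x := by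
  have hcos : Continuous fun t => cos (t * x) := by fun_prop
  rw [integral_sub intervalIntegrable_const (hcos.intervalIntegrable _ _),
    integral_comp_mul_right cos hx, integral_cos, integral_const, smul_eq_mul, smul_eq_mul,
    mul_one, inv_mul_eq_div]

lemma min_le_abs_integral_one_sub_cos_mul (α β x : ℝ) :
    min (|β - α| ^ 3 * x ^ 2 / 32) (|β - α| / 8) ≤ |∫ t in α..β, (1 - cos (t * x))| := by
  rcases eq_or_ne x 0 with rfl | hx
  · simp [min_eq_left (by positivity : (0 : ℝ) ≤ |β - α| / 8)]
  have hx' : 0 < |x| := abs_pos.2 hx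
  set u := (β - α) * x / 2
  have hu : |u| = |β - α| * |x| / 2 := by rw [abs_div, abs_mul, abs_two]
  have hsin : |sin (β * x) - sin (α * x)| ≤ 2 * |sin u| := by
    simpa only [← sub_mul] using abs_sin_sub_sin_le_two_mul_abs_sin (β * x) (α * x)
  calc min (|β - α| ^ 3 * x ^ 2 / 32) (|β - α| / 8)
      = min (|u| ^ 3) |u| / (4 * |x|) := by
        rw [← min_div_div_right (by positivity), hu, ← sq_abs x]
        congr 1 <;> field_simp <;> ring
    _ ≤ 8 * (|u| - |sin u|) / (4 * |x|) := by
        gcongr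
        exact min_pow_three_le_sub_abs_sin u
    _ = |β - α| - 2 * |sin u| / |x| := by
        rw [hu]; field_simp; ring
    _ ≤ |β - α| - |(sin (β * x) - sin (α * x)) / x| := by rw [abs_div]; gcongr
    _ ≤ |∫ t in α..β, (1 - cos (t * x))| := by
        rw [integral_one_sub_cos_mul hx]
        exact abs_sub_abs_le_abs_sub _ _

lemma abs_integral_mul_le_mul_integral {f g : ℝ → ℝ} {a b M : ℝ} {μ : MeasureTheory.Measure ℝ}
    (hab : a ≤ b) (hg : IntervalIntegrable g μ a b) (hg₀ : ∀ s ∈ Ioc a b, 0 ≤ g s)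
    (hfM : ∀ s ∈ Ioc a b, |f s| ≤ M) :
    |∫ s in a..b, g s * f s ∂μ| ≤ M * ∫ s in a..b, g s ∂μ := by
  rw [← Real.norm_eq_abs, ← intervalIntegral.integral_const_mul M]
  refine norm_integral_le_of_norm_le hab (.of_forall fun s hs => ?_) (hg.const_mul M)
  rw [Real.norm_eq_abs, abs_mul, abs_of_nonneg (hg₀ s hs), mul_comm M]
  exact mul_le_mul_of_nonneg_left (hfM s hs) (hg₀ s hs)

lemma abs_integral_le_mul_integral_comp {f f' g : ℝ → ℝ} {a b M : ℝ} (hab : a ≤ b)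
    (hder : ∀ s ∈ Icc a b, HasDerivAt f (f' s) s) (hcont : ContinuousOn f' (Icc a b))
    (hg : Continuous g) (hg₀ : ∀ t, 0 ≤ g t) (hM : ∀ s ∈ Icc a b, |f' s| ≤ M) :
    |∫ t in f a..f b, g t| ≤ M * ∫ s in a..b, g (f s) := by
  have hIcc : uIcc a b = Icc a b := uIcc_of_le hab
  have hf : ContinuousOn f (Icc a b) := fun s hs => (hder s hs).continuousAt.continuousWithinAt
  rw [← integral_comp_mul_deriv (by rwa [hIcc]) (by rwa [hIcc]) hg]
  exact abs_integral_mul_le_mul_integral hab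
    ((hg.comp_continuousOn hf).intervalIntegrable_of_Icc hab) (fun s _ => hg₀ _)
    (fun s hs => hM s (Ioc_subset_Icc_self hs))

lemma apply_ne_apply_of_hasDerivAt_ne_zero {f f' : ℝ → ℝ} {a b : ℝ} (hab : a < b)
    (hder : ∀ s ∈ Icc a b, HasDerivAt f (f' s) s) (hne : ∀ s ∈ Ioo a b, f' s ≠ 0) :
    f a ≠ f b := fun heq =>
  have ⟨ξ, hξ, hzero⟩ := exists_hasDerivAt_eq_zero hab
    (fun s hs => (hder s hs).continuousAt.continuousWithinAt) heq
    (fun s hs => hder s (Ioo_subset_Icc_self hs))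
  hne ξ hξ hzero

lemma min_mul_min_one_le {p q t : ℝ} (hp : 0 ≤ p) (hq : 0 ≤ q) (ht : 0 ≤ t) :
    min p q * min t 1 ≤ min (p * t) q :=
  le_min (mul_le_mul (min_le_left _ _) (min_le_left _ _) (le_min ht zero_le_one) hp)
    ((mul_le_of_le_one_right (le_min hp hq) (min_le_right _ _)).trans (min_le_right _ _))

theorem integral_one_sub_cos_lower_bound_general (a b : ℝ) (hab : a < b)
    (h h' : ℝ → ℝ)
    (hder : ∀ s ∈ Set.Icc a b, HasDerivAt h (h' s) s)
    (hcont : ContinuousOn h' (Set.Icc a b))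
    (hne : ∀ s ∈ Set.Icc a b, h' s ≠ 0) :
    ∃ c > (0:ℝ), ∀ x : ℝ,
      c * min (x ^ 2) 1 ≤ ∫ s in a..b, (1 - Real.cos (h s * x)) := by
  have ha : a ∈ Icc a b := ⟨le_rfl, hab.le⟩
  obtain ⟨M, hM⟩ := isCompact_Icc.exists_bound_of_continuousOn hcont
  have hM₀ : 0 < M := (norm_pos_iff.2 (hne a ha)).trans_le (hM a ha)
  set L := |h b - h a|
  have hL : 0 < L := abs_pos.2 <| sub_ne_zero.2 <| Ne.symm <|
    apply_ne_apply_of_hasDerivAt_ne_zero hab hder fun s hs => hne s (Ioo_subset_Icc_self hs)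
  refine ⟨min (L ^ 3 / 32) (L / 8) / M, by positivity, fun x => ?_⟩
  calc min (L ^ 3 / 32) (L / 8) / M * min (x ^ 2) 1
      ≤ min (L ^ 3 * x ^ 2 / 32) (L / 8) / M := by
        rw [div_mul_eq_mul_div, mul_div_right_comm (L ^ 3)]
        gcongr
        exact min_mul_min_one_le (by positivity) (by positivity) (sq_nonneg x)
    _ ≤ |∫ t in h a..h b, (1 - cos (t * x))| / M := by
        gcongr
        exact min_le_abs_integral_one_sub_cos_mul _ _ x
    _ ≤ ∫ s in a..b, (1 - Real.cos (h s * x)) := by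
        rw [div_le_iff₀' hM₀]
        exact abs_integral_le_mul_integral_comp hab.le hder hcont (by fun_prop)
          (fun t => sub_nonneg.2 (cos_le_one _)) hM

/-- If `h : [a,b] → (0,∞)` has a continuous nonvanishing derivative on `[a,b]`,
then there is `c > 0` with `∫_a^b (1 - cos(h(s)x)) ds ≥ c (x² ∧ 1)` for all `x`. -/
theorem integral_one_sub_cos_lower_bound (a b : ℝ) (hab : a < b)
    (h h' : ℝ → ℝ)
    (hpos : ∀ s ∈ Set.Icc a b, 0 < h s)
    (hder : ∀ s ∈ Set.Icc a b, HasDerivAt h (h' s) s)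
    (hcont : ContinuousOn h' (Set.Icc a b))
    (hne : ∀ s ∈ Set.Icc a b, h' s ≠ 0) :
    ∃ c > (0:ℝ), ∀ x : ℝ,
      c * min (x ^ 2) 1 ≤ ∫ s in a..b, (1 - Real.cos (h s * x)) :=
  integral_one_sub_cos_lower_bound_general a b hab h h' hder hcont hne
end
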